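/- Let ρ : ℝ → (0,1) be a continuous injection and (X_n), (Y_n) sequences of real random variables such that E[|ρ(X_n) − ρ(Y_n)|] → 0 and (Y_n) is bounded in measure (i.e., for every ε > 0 there is R with P(|Y_n| > R) < ε for all n). Then X_n − Y_n → 0 in measure. -/

import Mathlib

open MeasureTheory Filter Topology

/-! A continuous injection `ρ : ℝ → ℝ` is strictly monotone, so by compactness a displacement
`a ≤ |x - y|` with `|y| ≤ R` forces `η ≤ |ρ x - ρ y|` for some `η > 0`. Hence
`{a ≤ |X n - Y n|} ⊆ {R < |Y n|} ∪ {η ≤ |ρ (X n) - ρ (Y n)|}`: the first set is small by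
boundedness in measure, the second by Markov's inequality since `ρ ∘ X n - ρ ∘ Y n → 0` in `L¹`. -/

theorem StrictMono.exists_pos_le_abs_sub {ρ : ℝ → ℝ} (hm : StrictMono ρ) (hc : Continuous ρ)
    {a : ℝ} (ha : 0 < a) (R : ℝ) :
    ∃ η > 0, ∀ x y, |y| ≤ R → a ≤ |x - y| → η ≤ |ρ x - ρ y| := by
  -- the worst case is `x = y ± a`, and the gap there is bounded below on the compact `[-R, R]`
  set g : ℝ → ℝ := fun y => min (ρ (y + a) - ρ y) (ρ y - ρ (y - a))
  have hg_pos : ∀ y ∈ Set.Icc (-R) R, 0 < g y := fun y _ =>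
    lt_min (sub_pos.2 (hm (by linarith))) (sub_pos.2 (hm (by linarith)))
  obtain ⟨η, hη, hηg⟩ := isCompact_Icc.exists_forall_le' (by fun_prop) hg_pos
  refine ⟨η, hη, fun x y hy hxy => ?_⟩
  have hηy : η ≤ g y := hηg y (abs_le.1 hy)
  rcases le_abs.1 hxy with hxy | hxy
  · have : ρ (y + a) ≤ ρ x := hm.monotone (by linarith)
    have : g y ≤ ρ (y + a) - ρ y := min_le_left _ _
    exact le_abs.2 (Or.inl (by linarith))
  · have : ρ x ≤ ρ (y - a) := hm.monotone (by linarith)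
    have : g y ≤ ρ y - ρ (y - a) := min_le_right _ _
    exact le_abs.2 (Or.inr (by linarith))

theorem Continuous.exists_pos_le_abs_sub_of_injective {ρ : ℝ → ℝ} (hc : Continuous ρ)
    (hi : Function.Injective ρ) {a : ℝ} (ha : 0 < a) (R : ℝ) :
    ∃ η > 0, ∀ x y, |y| ≤ R → a ≤ |x - y| → η ≤ |ρ x - ρ y| := by
  rcases hc.strictMono_of_inj hi with hm | hm
  · exact hm.exists_pos_le_abs_sub hc ha R
  · obtain ⟨η, hη, H⟩ := hm.neg.exists_pos_le_abs_sub hc.neg ha R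
    refine ⟨η, hη, fun x y hy hxy => ?_⟩
    have := H x y hy hxy
    rwa [neg_sub_neg, abs_sub_comm] at this

theorem tendstoInMeasure_of_tendsto_integral_norm {α ι E : Type*} [MeasurableSpace α]
    [NormedAddCommGroup E] {μ : Measure α} {l : Filter ι} {f : ι → α → E}
    (hf : ∀ i, Integrable (f i) μ) (h : Tendsto (fun i => ∫ ω, ‖f i ω‖ ∂μ) l (𝓝 0)) :
    TendstoInMeasure μ f l (fun _ => 0) := by
  refine tendstoInMeasure_of_tendsto_eLpNorm one_ne_zero (fun i => (hf i).aestronglyMeasurable)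
    aestronglyMeasurable_const ?_
  have hnorm (i : ι) : eLpNorm (f i - fun _ => 0) 1 μ = ENNReal.ofReal (∫ ω, ‖f i ω‖ ∂μ) := by
    rw [← Pi.zero_def, sub_zero, eLpNorm_one_eq_lintegral_enorm,
      ofReal_integral_norm_eq_lintegral_enorm (hf i)]
  simpa only [hnorm, ENNReal.ofReal_zero] using ENNReal.tendsto_ofReal h

theorem tendstoInMeasure_sub_of_comp {α ι : Type*} [MeasurableSpace α] {μ : Measure α}
    {l : Filter ι} {ρ : ℝ → ℝ} (hc : Continuous ρ) (hi : Function.Injective ρ)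
    {X Y : ι → α → ℝ}
    (h : TendstoInMeasure μ (fun i ω => ρ (X i ω) - ρ (Y i ω)) l (fun _ => 0))
    (hY : ∀ ε : ℝ, 0 < ε → ∃ R : ℝ, ∀ i, μ {ω | R < |Y i ω|} < ENNReal.ofReal ε) :
    TendstoInMeasure μ (fun i ω => X i ω - Y i ω) l (fun _ => 0) := by
  rw [tendstoInMeasure_iff_dist] at h ⊢
  intro a ha
  refine ENNReal.tendsto_nhds_zero.2 fun ε hε => ?_
  obtain ⟨r, -, hr0, hrε⟩ := ENNReal.lt_iff_exists_real_btwn.1 hε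
  have hr : 0 < r / 2 := by simpa using hr0
  obtain ⟨R, hR⟩ := hY (r / 2) hr
  obtain ⟨η, hη, hgap⟩ := hc.exists_pos_le_abs_sub_of_injective hi ha R
  filter_upwards [ENNReal.tendsto_nhds_zero.1 (h η hη) _ (ENNReal.ofReal_pos.2 hr)] with i hiη
  have hsub : {ω | a ≤ dist (X i ω - Y i ω) 0} ⊆
      {ω | R < |Y i ω|} ∪ {ω | η ≤ dist (ρ (X i ω) - ρ (Y i ω)) 0} := by
    intro ω hω
    simp only [Real.dist_eq, sub_zero, Set.mem_ofPred_eq, Set.mem_union] at hω ⊢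
    by_cases hYR : R < |Y i ω|
    · exact Or.inl hYR
    · exact Or.inr (hgap _ _ (not_lt.1 hYR) hω)
  calc μ {ω | a ≤ dist (X i ω - Y i ω) 0}
      ≤ μ {ω | R < |Y i ω|} + μ {ω | η ≤ dist (ρ (X i ω) - ρ (Y i ω)) 0} :=
        (measure_mono hsub).trans (measure_union_le _ _)
    _ ≤ ENNReal.ofReal (r / 2) + ENNReal.ofReal (r / 2) := add_le_add (hR i).le hiη
    _ = ENNReal.ofReal r := by rw [← ENNReal.ofReal_add hr.le hr.le, add_halves]
    _ ≤ ε := hrε.le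

/-- If `ρ : ℝ → (0,1)` is a continuous injection, `E[|ρ(X n) - ρ(Y n)|] → 0`,
and `(Y n)` is bounded in measure, then `X n - Y n → 0` in measure. -/
theorem stmt_15 {Ω : Type*} [MeasurableSpace Ω] (μ : Measure Ω) [IsProbabilityMeasure μ]
    (ρ : ℝ → ℝ) (hρc : Continuous ρ) (hρi : Function.Injective ρ)
    (hρr : ∀ x, ρ x ∈ Set.Ioo (0:ℝ) 1)
    (X Y : ℕ → Ω → ℝ) (hX : ∀ n, Measurable (X n)) (hY : ∀ n, Measurable (Y n))
    (hL1 : Tendsto (fun n => ∫ ω, |ρ (X n ω) - ρ (Y n ω)| ∂μ) atTop (nhds 0))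
    (hbdd : ∀ ε : ℝ, 0 < ε → ∃ R : ℝ, ∀ n,
      μ {ω | R < |Y n ω|} < ENNReal.ofReal ε) :
    TendstoInMeasure μ (fun n ω => X n ω - Y n ω) atTop (fun _ => (0:ℝ)) := by
  have hρ_norm : ∀ x, ‖ρ x‖ ≤ 1 := fun x => by
    rw [Real.norm_of_nonneg (hρr x).1.le]; exact (hρr x).2.le
  have hρ_int : ∀ Z : Ω → ℝ, Measurable Z → Integrable (fun ω => ρ (Z ω)) μ := fun Z hZ =>
    .of_bound (hρc.measurable.comp hZ).aestronglyMeasurable 1 (ae_of_all _ fun ω => hρ_norm _)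
  have hint : ∀ n, Integrable (fun ω => ρ (X n ω) - ρ (Y n ω)) μ := fun n =>
    (hρ_int _ (hX n)).sub (hρ_int _ (hY n))
  exact tendstoInMeasure_sub_of_comp hρc hρi
    (tendstoInMeasure_of_tendsto_integral_norm hint hL1) hbdd
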